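/- Let n ≥ 1 be an integer and r > 0. The identity element (0,0) of the Heisenberg group H^n lies in the topological interior of the six-fold product set {h₁·h₂·h₃·h₄·h₅·h₆ : h₁,…,h₆ ∈ S_r^n}, where S_r^n = {(z,0) ∈ H^n : ‖z‖ = r} (equivalently, the support of the six-fold convolution power σ_r^{∗6} contains an open neighbourhood of the identity). -/

import Mathlib

open MeasureTheory

/-- The underlying space of the Heisenberg group `H^n = ℂ^n × ℝ`. -/
abbrev Heis (n : ℕ) := EuclideanSpace ℂ (Fin n) × ℝ

/-- The Heisenberg group multiplication
`(z,t)·(w,s) = (z+w, t+s+(1/2)Im⟨z,w⟩)` with `⟨z,w⟩ = ∑ j, z j * conj (w j)`. -/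
noncomputable def heisMul {n : ℕ} (p q : Heis n) : Heis n :=
  (p.1 + q.1, p.2 + q.2 + (1 / 2) * (∑ j, p.1 j * (starRingEnd ℂ) (q.1 j)).im)

/-- The sphere `S_r^n = {(z,0) : ‖z‖ = r}` in the Heisenberg group. -/
def heisSphere (n : ℕ) (r : ℝ) : Set (Heis n) := {p : Heis n | ‖p.1‖ = r ∧ p.2 = 0}

/-!
Write `h = (z, 0)` for the points of `S_r^n` and `ω(z, w) = Im ⟨z, w⟩`. Two sphere points reach any
`(w, t)` with `‖w‖ ≤ 2r`, and then `|t| = |ω(z₁, z₂)| / 2 ≤ r² / 2`. The remaining four factors are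
taken to be `(a, 0), (b, 0), (-a, 0), (-b, 0)`, a commutator: it is the central element
`(0, ω(a, b))`, and `ω(a, b)` sweeps out all of `[-r², r²]` for `‖a‖ = ‖b‖ = r` (put `a`, `b` on a
common complex line). So every `(w, s)` with `‖w‖ ≤ 2r` and `|s| ≤ r² / 2` is a six-fold product.
-/

theorem Complex.exists_re_eq_norm_eq {a ρ : ℝ} (h : |a| ≤ ρ) : ∃ c : ℂ, c.re = a ∧ ‖c‖ = ρ := by
  have hρ : 0 ≤ ρ := (abs_nonneg a).trans h
  refine ⟨⟨a, √(ρ ^ 2 - a ^ 2)⟩, rfl, ?_⟩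
  have : a ^ 2 ≤ ρ ^ 2 := sq_le_sq' (abs_le.1 h).1 (abs_le.1 h).2
  rw [Complex.norm_def, Complex.normSq_mk, ← sq, ← sq, Real.sq_sqrt (by linarith),
    add_sub_cancel, Real.sqrt_sq hρ]

theorem exists_add_eq_of_norm_le_two_mul {E : Type*} [NormedAddCommGroup E] [NormedSpace ℂ E]
    [Nontrivial E] {r : ℝ} (hr : 0 ≤ r) {w : E} (hw : ‖w‖ ≤ 2 * r) :
    ∃ z₁ z₂ : E, ‖z₁‖ = r ∧ ‖z₂‖ = r ∧ z₁ + z₂ = w := by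
  rcases eq_or_ne w 0 with rfl | hw0
  · obtain ⟨v, hv⟩ := exists_norm_eq E hr
    exact ⟨v, -v, hv, by rw [norm_neg, hv], add_neg_cancel v⟩
  have hwpos : 0 < ‖w‖ := norm_pos_iff.2 hw0
  -- `w = c • w + (1 - c) • w` where `re c = 1/2` makes `1 - c = conj c`, so both parts have norm `r`
  obtain ⟨c, hre, hc⟩ : ∃ c : ℂ, c.re = 1 / 2 ∧ ‖c‖ = r / ‖w‖ := by
    refine Complex.exists_re_eq_norm_eq ?_
    rw [le_div_iff₀ hwpos]
    norm_num
    linarith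
  have hconj : 1 - c = (starRingEnd ℂ) c := by
    rw [Complex.ext_iff]; norm_num [hre]
  refine ⟨c • w, (1 - c) • w, ?_, ?_, by rw [← add_smul, add_sub_cancel, one_smul]⟩
  · rw [norm_smul, hc, div_mul_cancel₀ _ hwpos.ne']
  · rw [norm_smul, hconj, Complex.norm_conj, hc, div_mul_cancel₀ _ hwpos.ne']

section InnerProductSpace

variable {E : Type*} [NormedAddCommGroup E] [InnerProductSpace ℂ E]

theorem abs_im_inner_le_norm_mul_norm (x y : E) :
    |(inner ℂ x y).im| ≤ ‖x‖ * ‖y‖ :=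
  (Complex.abs_im_le_norm _).trans (norm_inner_le_norm x y)

theorem exists_norm_eq_im_inner_eq [Nontrivial E] {r c : ℝ} (hr : 0 < r) (hc : |c| ≤ r ^ 2) :
    ∃ a b : E, ‖a‖ = r ∧ ‖b‖ = r ∧ (inner ℂ b a).im = c := by
  obtain ⟨e, he⟩ := exists_norm_eq E zero_le_one
  obtain ⟨δ, hδre, hδ⟩ : ∃ δ : ℂ, δ.re = c / r ∧ ‖δ‖ = r := by
    refine Complex.exists_re_eq_norm_eq ?_
    rw [abs_div, abs_of_pos hr, div_le_iff₀ hr]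
    linarith
  refine ⟨(Complex.I * δ) • e, (r : ℂ) • e, ?_, ?_, ?_⟩
  · simp [norm_smul, hδ, he]
  · simp [norm_smul, he, abs_of_pos hr]
  · rw [inner_smul_left, inner_smul_right, inner_self_eq_norm_sq_to_K, he]
    simp [hδre, mul_div_cancel₀ _ hr.ne']

end InnerProductSpace

section HeisenbergProducts

variable {n : ℕ}

theorem heisMul_eq_inner (p q : Heis n) :
    heisMul p q = (p.1 + q.1, p.2 + q.2 + (1 / 2) * (inner ℂ q.1 p.1).im) := by
  simp [heisMul, PiLp.inner_apply]

theorem heisMul_mk_zero_mk_zero (z w : EuclideanSpace ℂ (Fin n)) :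
    heisMul (z, 0) (w, 0) = (z + w, (1 / 2) * (inner ℂ w z).im) := by
  simp [heisMul_eq_inner]

theorem heisMul_commutator_mk_zero (p : Heis n) (a b : EuclideanSpace ℂ (Fin n)) :
    heisMul (heisMul (heisMul (heisMul p (a, 0)) (b, 0)) (-a, 0)) (-b, 0) =
      (p.1, p.2 + (inner ℂ b a).im) := by
  have hab : (inner ℂ a b).im = -(inner ℂ b a).im := by
    rw [← inner_conj_symm, Complex.conj_im]
  have haa : (inner ℂ a a).im = 0 := by simpa using inner_self_im (𝕜 := ℂ) a
  have hbb : (inner ℂ b b).im = 0 := by simpa using inner_self_im (𝕜 := ℂ) b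
  simp only [heisMul_eq_inner, inner_add_right, inner_neg_left, inner_neg_right,
    Complex.add_im, Complex.neg_im, hab, haa, hbb]
  refine Prod.ext ?_ ?_
  · abel_nf
  · ring

theorem mem_heisSphere_sixfold_of_norm_le [NeZero n] {r : ℝ} (hr : 0 < r)
    {w : EuclideanSpace ℂ (Fin n)} {s : ℝ} (hw : ‖w‖ ≤ 2 * r) (hs : |s| ≤ r ^ 2 / 2) :
    ∃ h₁ ∈ heisSphere n r, ∃ h₂ ∈ heisSphere n r, ∃ h₃ ∈ heisSphere n r,
      ∃ h₄ ∈ heisSphere n r, ∃ h₅ ∈ heisSphere n r, ∃ h₆ ∈ heisSphere n r,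
        (w, s) = heisMul (heisMul (heisMul (heisMul (heisMul h₁ h₂) h₃) h₄) h₅) h₆ := by
  obtain ⟨z₁, z₂, hz₁, hz₂, rfl⟩ := exists_add_eq_of_norm_le_two_mul hr.le hw
  set t := (1 / 2) * (inner ℂ z₂ z₁).im
  have ht : |t| ≤ r ^ 2 / 2 := by
    have := abs_im_inner_le_norm_mul_norm z₂ z₁
    rw [hz₁, hz₂] at this
    rw [abs_mul, abs_of_pos one_half_pos]
    linarith
  obtain ⟨a, b, ha, hb, hab⟩ := exists_norm_eq_im_inner_eq (E := EuclideanSpace ℂ (Fin n)) hr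
    (c := s - t) ((abs_sub _ _).trans (by linarith))
  refine ⟨(z₁, 0), ⟨hz₁, rfl⟩, (z₂, 0), ⟨hz₂, rfl⟩, (a, 0), ⟨ha, rfl⟩, (b, 0), ⟨hb, rfl⟩,
    (-a, 0), ⟨by rwa [norm_neg], rfl⟩, (-b, 0), ⟨by rwa [norm_neg], rfl⟩, ?_⟩
  rw [heisMul_commutator_mk_zero, heisMul_mk_zero_mk_zero, hab, add_sub_cancel]

end HeisenbergProducts

theorem stmt17 (n : ℕ) (hn : 1 ≤ n) (r : ℝ) (hr : 0 < r) :
    ((0, 0) : Heis n) ∈ interior {p : Heis n |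
      ∃ h₁ ∈ heisSphere n r, ∃ h₂ ∈ heisSphere n r, ∃ h₃ ∈ heisSphere n r,
        ∃ h₄ ∈ heisSphere n r, ∃ h₅ ∈ heisSphere n r, ∃ h₆ ∈ heisSphere n r,
          p = heisMul (heisMul (heisMul (heisMul (heisMul h₁ h₂) h₃) h₄) h₅) h₆} := by
  have : NeZero n := ⟨by omega⟩
  refine mem_interior.2 ⟨{p | ‖p.1‖ < 2 * r} ∩ {p | |p.2| < r ^ 2 / 2}, ?_, ?_, ?_⟩
  · rintro ⟨w, s⟩ ⟨hw, hs⟩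
    exact mem_heisSphere_sixfold_of_norm_le hr hw.le hs.le
  · exact (isOpen_lt (by fun_prop) continuous_const).inter
      (isOpen_lt (by fun_prop) continuous_const)
  · exact ⟨by simpa using hr, by simpa using pow_pos hr 2⟩
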